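/- arXiv:2601.09419 — 2 statements merged into one kernel-verified Lean document; each statement's English description precedes it below -/
import Mathlib

section
/- Let D, t, u, v be positive integers such that D is not a perfect square and the continued fraction expansion of √D is [t; \overline{u, v, u, 2t}] (period length 4). Then u(uv + 2) divides 2vut + 2t + v and D = t² + (2vut + 2t + v)/(u(uv + 2)). -/
/-- Iterated Gauss map: `gaussIter x n` is the `n`-th complete quotient of the
continued fraction expansion of `x`. -/
noncomputable def gaussIter (x : ℝ) : ℕ → ℝ
  | 0 => x
  | n + 1 => (gaussIter x n - ⌊gaussIter x n⌋)⁻¹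

/-- `cfCoeff x n` is the `n`-th partial quotient of the continued fraction of `x`. -/
noncomputable def cfCoeff (x : ℝ) (n : ℕ) : ℤ := ⌊gaussIter x n⌋

/-- `IsPeriodicCF x k a` says that the continued fraction expansion of `x` is
`[a 0; a 1, …, a k, a 1, …, a k, …]`, i.e. `x = [a 0; \overline{a 1, …, a k}]`,
where the partial quotients `a 1, …, a k` are positive and `a k = 2 * a 0`. -/
def IsPeriodicCF (x : ℝ) (k : ℕ) (a : ℕ → ℤ) : Prop :=
  0 < a 0 ∧ (∀ i : ℕ, 1 ≤ i → i ≤ k → 0 < a i) ∧ a k = 2 * a 0 ∧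
    cfCoeff x 0 = a 0 ∧ ∀ n : ℕ, 1 ≤ n → cfCoeff x n = a ((n - 1) % k + 1)

/-! Two irrationals with the same partial quotients are equal: if `ξₙ = aₙ + 1/ξₙ₊₁` and
`ηₙ = aₙ + 1/ηₙ₊₁`, then `|ξₙ - ηₙ| = |ξₙ₊₁ - ηₙ₊₁| / (ξₙ₊₁ηₙ₊₁)`, and since
`ξₙ₊₁ξₙ₊₂ = aₙ₊₁ξₙ₊₂ + 1 ≥ 2` the difference shrinks by a factor `4` every two steps.
Periodicity of the partial quotients of `√D` therefore gives `ξ₅ = ξ₁` for its complete quotients,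
so `√D = t + 1/ξ₁` with `ξ₁ = [u; v, u, t + √D]`; clearing denominators yields
`(D - t²) · u(uv + 2) = 2vut + 2t + v`. -/

lemma gaussIter_irrational {x : ℝ} (hx : Irrational x) : ∀ n, Irrational (gaussIter x n)
  | 0 => hx
  | n + 1 => ((gaussIter_irrational hx n).sub_intCast _).inv

lemma gaussIter_add (x : ℝ) (m : ℕ) : ∀ n, gaussIter (gaussIter x m) n = gaussIter x (n + m)
  | 0 => by simp [gaussIter]
  | n + 1 => by rw [Nat.add_right_comm, gaussIter, gaussIter, gaussIter_add x m n]

lemma cfCoeff_gaussIter (x : ℝ) (m n : ℕ) : cfCoeff (gaussIter x m) n = cfCoeff x (n + m) := by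
  rw [cfCoeff, cfCoeff, gaussIter_add]

lemma gaussIter_eq_cfCoeff_add_inv (x : ℝ) (n : ℕ) :
    gaussIter x n = cfCoeff x n + (gaussIter x (n + 1))⁻¹ := by
  rw [gaussIter, inv_inv, cfCoeff]; ring

lemma one_lt_gaussIter_succ {x : ℝ} (hx : Irrational x) (n : ℕ) : 1 < gaussIter x (n + 1) := by
  have hfract : 0 < Int.fract (gaussIter x n) :=
    Int.fract_pos.2 ((gaussIter_irrational hx n).ne_int _)
  exact one_lt_inv_iff₀.2 ⟨hfract, Int.fract_lt_one _⟩

lemma two_le_gaussIter_succ_mul_gaussIter_succ_succ {x : ℝ} (hx : Irrational x) (n : ℕ) :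
    2 ≤ gaussIter x (n + 1) * gaussIter x (n + 2) := by
  have h₁ := one_lt_gaussIter_succ hx n
  have h₂ := one_lt_gaussIter_succ hx (n + 1)
  have hc : (1 : ℝ) ≤ cfCoeff x (n + 1) := by
    exact_mod_cast Int.le_floor.2 (by exact_mod_cast h₁.le)
  rw [gaussIter_eq_cfCoeff_add_inv x (n + 1), add_mul, inv_mul_cancel₀ (by positivity)]
  nlinarith

lemma abs_gaussIter_sub_of_cfCoeff_eq {x y : ℝ} (hx : Irrational x) (hy : Irrational y)
    {n : ℕ} (h : cfCoeff x n = cfCoeff y n) :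
    |gaussIter x n - gaussIter y n| =
      |gaussIter x (n + 1) - gaussIter y (n + 1)| /
        (gaussIter x (n + 1) * gaussIter y (n + 1)) := by
  have hx₁ := one_pos.trans (one_lt_gaussIter_succ hx n)
  have hy₁ := one_pos.trans (one_lt_gaussIter_succ hy n)
  rw [gaussIter_eq_cfCoeff_add_inv x n, gaussIter_eq_cfCoeff_add_inv y n, h,
    add_sub_add_left_eq_sub, inv_sub_inv hx₁.ne' hy₁.ne', abs_div, abs_sub_comm,
    abs_of_pos (mul_pos hx₁ hy₁)]

lemma abs_gaussIter_sub_le_of_cfCoeff_eq {x y : ℝ} (hx : Irrational x) (hy : Irrational y)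
    (h : ∀ n, cfCoeff x n = cfCoeff y n) (k : ℕ) :
    ∀ n, |gaussIter x n - gaussIter y n| ≤ (1 / 4) ^ k := by
  induction k with
  | zero => exact fun n => by simpa using (Int.abs_sub_lt_one_of_floor_eq_floor (h n)).le
  | succ k ih =>
    intro n
    have hx₂ := two_le_gaussIter_succ_mul_gaussIter_succ_succ hx n
    have hy₂ := two_le_gaussIter_succ_mul_gaussIter_succ_succ hy n
    calc |gaussIter x n - gaussIter y n|
        = |gaussIter x (n + 2) - gaussIter y (n + 2)| /
            ((gaussIter x (n + 1) * gaussIter x (n + 2)) *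
              (gaussIter y (n + 1) * gaussIter y (n + 2))) := by
          rw [abs_gaussIter_sub_of_cfCoeff_eq hx hy (h n),
            abs_gaussIter_sub_of_cfCoeff_eq hx hy (h (n + 1)), div_div]
          ring_nf
      _ ≤ |gaussIter x (n + 2) - gaussIter y (n + 2)| / 4 := by gcongr; nlinarith
      _ ≤ (1 / 4) ^ (k + 1) := by rw [pow_succ]; linarith [ih (n + 2)]

lemma eq_of_cfCoeff_eq {x y : ℝ} (hx : Irrational x) (hy : Irrational y)
    (h : ∀ n, cfCoeff x n = cfCoeff y n) : x = y := by
  have hlim :=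
    tendsto_pow_atTop_nhds_zero_of_lt_one (by norm_num : (0 : ℝ) ≤ 1 / 4) (by norm_num)
  have := ge_of_tendsto' hlim fun k => abs_gaussIter_sub_le_of_cfCoeff_eq hx hy h k 0
  exact sub_eq_zero.1 (abs_nonpos_iff.1 this)

lemma sq_sub_sq_mul_eq_of_period_four {K : Type*} [Field K] {x t u v ξ₁ ξ₂ ξ₃ ξ₄ : K}
    (h₁ : ξ₁ ≠ 0) (h₂ : ξ₂ ≠ 0) (h₃ : ξ₃ ≠ 0) (h₄ : ξ₄ ≠ 0)
    (e₀ : x = t + ξ₁⁻¹) (e₁ : ξ₁ = u + ξ₂⁻¹) (e₂ : ξ₂ = v + ξ₃⁻¹) (e₃ : ξ₃ = u + ξ₄⁻¹)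
    (e₄ : ξ₄ = 2 * t + ξ₁⁻¹) :
    (x ^ 2 - t ^ 2) * (u * (u * v + 2)) = 2 * v * u * t + 2 * t + v := by
  subst e₀
  field_simp at e₁ e₂ e₃ e₄ ⊢
  grind

lemma dvd_and_eq_add_div_of_sub_mul_eq {D s k m : ℕ} (hk : 0 < k) (h : ((D : ℤ) - s) * k = m) :
    k ∣ m ∧ D = s + m / k := by
  obtain ⟨d, rfl⟩ : ∃ d, D = s + d := Nat.exists_eq_add_of_le <| by
    by_contra! hlt
    nlinarith [(by exact_mod_cast hlt : (D : ℤ) < s), (by exact_mod_cast hk : (0 : ℤ) < k)]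
  have hd : d * k = m := by exact_mod_cast (by push_cast at h; linarith : (d : ℤ) * k = m)
  exact ⟨Dvd.intro_left d hd, by rw [← hd, Nat.mul_div_cancel d hk]⟩

theorem sqrt_cf_period_four_eq_general (D t u v : ℕ)
    (hu : 0 < u) (hsq : ¬ IsSquare D)
    (h : IsPeriodicCF (Real.sqrt D) 4
      (fun n => if n = 0 then (t : ℤ) else if n = 1 then u else if n = 2 then v
        else if n = 3 then u else 2 * t)) :
    u * (u * v + 2) ∣ 2 * v * u * t + 2 * t + v ∧
      D = t ^ 2 + (2 * v * u * t + 2 * t + v) / (u * (u * v + 2)) := by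
  obtain ⟨-, -, -, hc₀, hper⟩ := h
  set x := Real.sqrt D
  have hx : Irrational x := irrational_sqrt_natCast_iff.2 hsq
  have hc : ∀ n, cfCoeff x (n + 1) = if n % 4 = 0 then (u : ℤ) else if n % 4 = 1 then v
      else if n % 4 = 2 then u else 2 * t := fun n => by
    rw [hper (n + 1) n.succ_pos]; grind
  have h₅₁ : gaussIter x 5 = gaussIter x 1 :=
    eq_of_cfCoeff_eq (gaussIter_irrational hx 5) (gaussIter_irrational hx 1) fun n => by
      rw [cfCoeff_gaussIter, cfCoeff_gaussIter, show n + 5 = n + 4 + 1 by ring, hc, hc,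
        Nat.add_mod_right]
  have hpos n : gaussIter x (n + 1) ≠ 0 := (one_pos.trans (one_lt_gaussIter_succ hx n)).ne'
  have e n := gaussIter_eq_cfCoeff_add_inv x n
  have key := sq_sub_sq_mul_eq_of_period_four (x := x) (hpos 0) (hpos 1) (hpos 2) (hpos 3)
    (by simpa [hc₀, gaussIter] using e 0) (by simpa [hc] using e 1)
    (by simpa [hc] using e 2) (by simpa [hc] using e 3) (by simpa [hc, h₅₁] using e 4)
  rw [Real.sq_sqrt (Nat.cast_nonneg D)] at key
  exact dvd_and_eq_add_div_of_sub_mul_eq (by positivity) (by exact_mod_cast key)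

/-- If `√D = [t; \overline{u, v, u, 2t}]` (period length 4), then
`u(uv + 2) ∣ 2vut + 2t + v` and `D = t² + (2vut + 2t + v)/(u(uv + 2))`. -/
theorem sqrt_cf_period_four_eq (D t u v : ℕ) (hD : 0 < D) (ht : 0 < t)
    (hu : 0 < u) (hv : 0 < v) (hsq : ¬ IsSquare D)
    (h : IsPeriodicCF (Real.sqrt D) 4
      (fun n => if n = 0 then (t : ℤ) else if n = 1 then u else if n = 2 then v
        else if n = 3 then u else 2 * t)) :
    u * (u * v + 2) ∣ 2 * v * u * t + 2 * t + v ∧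
      D = t ^ 2 + (2 * v * u * t + 2 * t + v) / (u * (u * v + 2)) :=
  sqrt_cf_period_four_eq_general D t u v hu hsq h
end

section
/- Let k be an even positive integer, p an odd prime, a a positive integer, and set l = k/2 − 1. Let (a₁, …, a_{k−1}) be a palindromic sequence of positive integers (a_i = a_{k−i} for all 1 ≤ i ≤ k−1), and define q₋₁ = 0, q₀ = 1, q_n = a_n·q_{n−1} + q_{n−2} for 1 ≤ n ≤ k−1. Suppose that either (a) l is odd and a₁ ≡ a₃ ≡ … ≡ a_l ≡ 0 (mod p^a), or (b) l is even, a₄ ≡ a₆ ≡ … ≡ a_l ≡ 0 (mod p^a), p does not divide a₁, and a₁·a₂ ≡ −1 (mod p^a). Then p does not divide q_{k−2}·(3 − q_{k−2}²); in particular, q_{k−2}·(3 − q_{k−2}²) is coprime to p^a. -/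
/-- The continuant sequence shifted by one: `cont a n = q_{n-1}`, where
`q₋₁ = 0`, `q₀ = 1` and `q_n = a_n * q_{n-1} + q_{n-2}`. Thus `cont a 0 = q₋₁`,
`cont a 1 = q₀`, and `cont a (n + 1) = q_n` for `n ≥ 0`. -/
def cont (a : ℕ → ℤ) : ℕ → ℤ
  | 0 => 0
  | 1 => 1
  | n + 2 => a (n + 1) * cont a (n + 1) + cont a n

lemma cont_rec (a : ℕ → ℤ) (n : ℕ) :
    cont a (n + 2) = a (n + 1) * cont a (n + 1) + cont a n := rfl

/-- Case (a) computation mod `p`. -/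
lemma caseA_aux (p : ℕ) (a : ℕ → ℤ) (N : ℕ)
    (h : ∀ j, j ≤ N → Odd j → ((a j : ZMod p) = 0)) :
    ∀ n, n ≤ N + 1 → ((cont a n : ZMod p) = if Odd n then 1 else 0) := by
  intro n
  induction n using Nat.twoStepInduction with
  | zero => intro _; simp [cont]
  | one => intro _; simp [cont]
  | more n ih1 ih2 =>
    intro hn
    have e1 : ((cont a (n + 2) : ℤ) : ZMod p)
        = (a (n + 1) : ZMod p) * ((cont a (n + 1) : ℤ) : ZMod p)
          + ((cont a n : ℤ) : ZMod p) := by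
      rw [cont_rec]; push_cast; ring
    have hpar : Odd (n + 2) ↔ Odd n := by
      simp [Nat.odd_add]
    rcases Nat.even_or_odd n with hev | hod
    · have hodd1 : Odd (n + 1) := by
        rcases hev with ⟨t, ht⟩; exact ⟨t, by omega⟩
      have ha : (a (n + 1) : ZMod p) = 0 := h (n + 1) (by omega) hodd1
      have hn' : ¬ Odd n := by simpa [Nat.not_odd_iff_even] using hev
      rw [e1, ha, ih1 (by omega), if_neg hn']
      rw [if_neg (by simpa [hpar] using hn')]
      ring
    · have hn2 : Odd (n + 2) := hpar.mpr hod
      rw [e1, ih1 (by omega), ih2 (by omega), if_pos hod, if_pos hn2]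
      have : ¬ Odd (n + 1) := by
        rcases hod with ⟨t, ht⟩
        simp [Nat.not_odd_iff_even, ht, parity_simps]
      rw [if_neg this]
      ring

/-- Case (b) computation mod `p`. -/
lemma caseB_aux (p : ℕ) (a : ℕ → ℤ) (M : ℕ)
    (h12 : ((a 1 * a 2 : ℤ) : ZMod p) = -1)
    (h : ∀ j, 4 ≤ j → j ≤ M → Even j → ((a j : ZMod p) = 0)) :
    ∀ n, 2 ≤ n → n ≤ M + 1 →
      ((cont a n : ZMod p) = if Even n then (a 1 : ZMod p) else 0) := by
  intro n
  induction n using Nat.twoStepInduction with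
  | zero => intro h2 _; omega
  | one => intro h2 _; omega
  | more n ih1 ih2 =>
    intro _ hn
    have e1 : ((cont a (n + 2) : ℤ) : ZMod p)
        = (a (n + 1) : ZMod p) * ((cont a (n + 1) : ℤ) : ZMod p)
          + ((cont a n : ℤ) : ZMod p) := by
      rw [cont_rec]; push_cast; ring
    match n, hn with
    | 0, hn =>
      -- cont a 2 = a 1
      have : cont a 2 = a 1 := by simp [cont_rec, cont]
      rw [show (0:ℕ) + 2 = 2 from rfl, this]
      simp
    | 1, hn =>
      -- cont a 3 = a 2 * a 1 + 1 ≡ -1 + 1 = 0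
      have h2 : cont a 2 = a 1 := by simp [cont_rec, cont]
      have h3 : cont a 3 = a 2 * a 1 + 1 := by
        rw [show (3:ℕ) = 1 + 2 from rfl, cont_rec, h2]; simp [cont]
      rw [show (1:ℕ) + 2 = 3 from rfl, h3]
      have : ¬ Even (3:ℕ) := by decide
      rw [if_neg this]
      push_cast
      have : ((a 2 : ℤ) : ZMod p) * ((a 1 : ℤ) : ZMod p) = -1 := by
        push_cast at h12; rw [mul_comm]; exact h12
      rw [this]; ring
    | (n + 2), hn =>
      have ihn := ih1 (by omega) (by omega)
      have ihn1 := ih2 (by omega) (by omega)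
      rcases Nat.even_or_odd n with hev | hod
      · -- n + 2 even too, n + 4 even; F(n+4) = a(n+3)*F(n+3) + F(n+2)
        have hev2 : Even (n + 2) := by rcases hev with ⟨t, ht⟩; exact ⟨t + 1, by omega⟩
        have hev4 : Even (n + 2 + 2) := by rcases hev with ⟨t, ht⟩; exact ⟨t + 2, by omega⟩
        have hodd3 : ¬ Even (n + 3) := by
          rcases hev with ⟨t, ht⟩
          simp [Nat.even_add_one, ht, parity_simps]
        rw [e1, ihn1, if_neg (by simpa using hodd3), ihn, if_pos hev2, if_pos hev4]
        ring
      · -- n odd: n+3 even, 4 ≤ n+3 ≤ M, a(n+3) ≡ 0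
        have hodd2 : ¬ Even (n + 2) := by
          rcases hod with ⟨t, ht⟩
          simp [ht, parity_simps]
        have hodd4 : ¬ Even (n + 2 + 2) := by
          rcases hod with ⟨t, ht⟩
          simp [ht, parity_simps]
        have hev3 : Even (n + 3) := by
          rcases hod with ⟨t, ht⟩; exact ⟨t + 2, by omega⟩
        have hge : 1 ≤ n := by rcases hod with ⟨t2, ht2⟩; omega
        have ha : (a (n + 3) : ZMod p) = 0 := h (n + 3) (by omega) (by omega) hev3
        rw [e1, show n + 2 + 1 = n + 3 from rfl, ha, ihn, if_neg hodd2,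
          if_neg hodd4]
        ring

/-- Lemma: `p` does not divide `q_{k-2}(3 − q_{k-2}²)` (with
`q_{k-2} = cont a (k-1)`), hence this quantity is coprime to `p^e`. -/
theorem cont_beta_coprime
    (k : ℕ) (hk : 0 < k) (hkeven : Even k)
    (p : ℕ) (hp : p.Prime) (hpodd : Odd p) (e : ℕ) (he : 0 < e)
    (l : ℕ) (hl : l = k / 2 - 1)
    (a : ℕ → ℤ) (hapos : ∀ i : ℕ, 1 ≤ i → i ≤ k - 1 → 0 < a i)
    (hpal : ∀ i : ℕ, 1 ≤ i → i ≤ k - 1 → a i = a (k - i))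
    (hchoice :
      (Odd l ∧ ∀ i : ℕ, 1 ≤ i → i ≤ l → Odd i → ((p : ℤ) ^ e ∣ a i)) ∨
      (Even l ∧ (∀ i : ℕ, 4 ≤ i → i ≤ l → Even i → ((p : ℤ) ^ e ∣ a i)) ∧
        ¬ ((p : ℤ) ∣ a 1) ∧ a 1 * a 2 ≡ -1 [ZMOD (p : ℤ) ^ e])) :
    ¬ ((p : ℤ) ∣ cont a (k - 1) * (3 - (cont a (k - 1)) ^ 2)) ∧
      IsCoprime (cont a (k - 1) * (3 - (cont a (k - 1)) ^ 2)) ((p : ℤ) ^ e) := by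
  haveI : Fact p.Prime := ⟨hp⟩
  obtain ⟨m, hm⟩ := hkeven
  have hm1 : 1 ≤ m := by omega
  have hp2 : p ≠ 2 := by
    rintro rfl
    exact (Nat.not_odd_iff_even.mpr (by norm_num)) hpodd
  have h2ne : (2 : ZMod p) ≠ 0 := by
    intro h
    have : ((2 : ℕ) : ZMod p) = 0 := by push_cast; exact h
    have := (ZMod.natCast_eq_zero_iff 2 p).mp this
    exact hp2 ((Nat.prime_dvd_prime_iff_eq hp Nat.prime_two).mp this)
  have hppow : (p : ℤ) ∣ (p : ℤ) ^ e := dvd_pow_self _ he.ne'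
  -- main claim: cont a (k-1) is ±1 mod p
  have hF : ((cont a (k - 1) : ℤ) : ZMod p) = 1 ∨
      ((cont a (k - 1) : ℤ) : ZMod p) = -1 := by
    rcases hchoice with ⟨hlodd, hdvd⟩ | ⟨hleven, hdvd, hnd, hmod⟩
    · -- case (a): l odd, all odd-index a's ≡ 0 mod p
      left
      have hlm : l = m - 1 := by omega
      have hlo : l % 2 = 1 := Nat.odd_iff.mp hlodd
      have hmge : 2 ≤ m := by omega
      have hmev : m % 2 = 0 := by omega
      have hzero : ∀ j, j ≤ k - 2 → Odd j → ((a j : ZMod p) = 0) := by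
        intro j hj hjo
        have hjo' : j % 2 = 1 := Nat.odd_iff.mp hjo
        have hj1 : 1 ≤ j := by omega
        have key : (p : ℤ) ∣ a j := by
          rcases le_or_gt j l with hle | hgt
          · exact dvd_trans hppow (hdvd j hj1 hle hjo)
          · have hpalj := hpal j hj1 (by omega)
            have h1 : 1 ≤ k - j := by omega
            have h2 : k - j ≤ l := by omega
            have h3 : Odd (k - j) := Nat.odd_iff.mpr (by omega)
            rw [hpalj]
            exact dvd_trans hppow (hdvd (k - j) h1 h2 h3)
        exact (ZMod.intCast_zmod_eq_zero_iff_dvd _ p).mpr key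
      have := caseA_aux p a (k - 2) hzero (k - 1) (by omega)
      rw [this, if_pos (Nat.odd_iff.mpr (by omega))]
    · -- case (b)
      have hlm : l = m - 1 := by omega
      have hle : l % 2 = 0 := Nat.even_iff.mp hleven
      rcases eq_or_lt_of_le hm1 with hmeq | hmgt
      · -- m = 1, k = 2, cont a 1 = 1
        left
        have : k - 1 = 1 := by omega
        rw [this]
        simp [cont]
      · -- m odd, m ≥ 3
        right
        have hmo : m % 2 = 1 := by omega
        have hm3 : 3 ≤ m := by omega
        have h12 : ((a 1 * a 2 : ℤ) : ZMod p) = -1 := by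
          have hdv : (p : ℤ) ^ e ∣ -1 - a 1 * a 2 := Int.ModEq.dvd hmod
          have : (p : ℤ) ∣ -1 - a 1 * a 2 := dvd_trans hppow hdv
          have h0 : ((-1 - a 1 * a 2 : ℤ) : ZMod p) = 0 :=
            (ZMod.intCast_zmod_eq_zero_iff_dvd _ p).mpr this
          push_cast at h0 ⊢
          linear_combination -h0
        have hzero : ∀ j, 4 ≤ j → j ≤ k - 3 → Even j → ((a j : ZMod p) = 0) := by
          intro j hj4 hj hje
          have hje' : j % 2 = 0 := Nat.even_iff.mp hje
          have key : (p : ℤ) ∣ a j := by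
            rcases le_or_gt j l with hle' | hgt
            · exact dvd_trans hppow (hdvd j hj4 hle' hje)
            · have hpalj := hpal j (by omega) (by omega)
              have h1 : 4 ≤ k - j := by omega
              have h2 : k - j ≤ l := by omega
              have h3 : Even (k - j) := Nat.even_iff.mpr (by omega)
              rw [hpalj]
              exact dvd_trans hppow (hdvd (k - j) h1 h2 h3)
          exact (ZMod.intCast_zmod_eq_zero_iff_dvd _ p).mpr key
        have hB := caseB_aux p a (k - 3) h12 hzero
        have hF2 : ((cont a (k - 2) : ℤ) : ZMod p) = ((a 1 : ℤ) : ZMod p) := by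
          have := hB (k - 2) (by omega) (by omega)
          rw [this, if_pos (Nat.even_iff.mpr (by omega))]
        have hF3 : ((cont a (k - 3) : ℤ) : ZMod p) = 0 := by
          have := hB (k - 3) (by omega) (by omega)
          rw [this, if_neg (by
            rw [Nat.even_iff]; omega)]
        have hk1 : k - 1 = (k - 3) + 2 := by omega
        have hk2 : (k - 3) + 1 = k - 2 := by omega
        have erec : cont a (k - 1) = a (k - 2) * cont a (k - 2) + cont a (k - 3) := by
          rw [hk1, cont_rec, hk2]
        have hpal2 : a 2 = a (k - 2) := by
          have := hpal 2 (by omega) (by omega)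
          simpa using this
        rw [erec]
        push_cast
        rw [hF2, hF3, ← hpal2]
        have h12' : ((a 1 : ℤ) : ZMod p) * ((a 2 : ℤ) : ZMod p) = -1 := by
          push_cast at h12; exact h12
        linear_combination h12'
  -- conclude
  set t : ℤ := cont a (k - 1) * (3 - (cont a (k - 1)) ^ 2) with ht
  have hcast : ((t : ℤ) : ZMod p) ≠ 0 := by
    have : ((t : ℤ) : ZMod p)
        = ((cont a (k - 1) : ℤ) : ZMod p) *
          (3 - ((cont a (k - 1) : ℤ) : ZMod p) ^ 2) := by
      rw [ht]; push_cast; ring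
    rcases hF with h1 | h1 <;> rw [this, h1]
    · intro h
      apply h2ne
      have : (1 : ZMod p) * (3 - 1 ^ 2) = 2 := by ring
      rw [this] at h; exact h
    · intro h
      apply h2ne
      have : (-1 : ZMod p) * (3 - (-1) ^ 2) = -2 := by ring
      rw [this] at h
      have := neg_eq_zero.mp h
      exact this
  have hnd : ¬ ((p : ℤ) ∣ t) := by
    intro h
    exact hcast ((ZMod.intCast_zmod_eq_zero_iff_dvd _ p).mpr h)
  refine ⟨hnd, ?_⟩
  have hprime : Prime ((p : ℕ) : ℤ) := by
    rw [Int.prime_iff_natAbs_prime]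
    simpa using hp
  exact ((hprime.coprime_iff_not_dvd.mpr hnd).symm).pow_right
end
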